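/- Let G be a finite group, w a word with w-values of order dividing e in G, and suppose every nilpotent subgroup of G generated by w-values has exponent dividing e. Let S be a normal nilpotent subgroup of G containing no nontrivial w-values, where w is the n-th Engel word. Then every element of G induces a nil-automorphism on S; consequently G/C_G(S) is nilpotent. -/

import Mathlib

/-! Every `[s,ₙ a]` with `s ∈ S` lies in the normal subgroup `S`, so it is a `w`-value in `S`
and hence trivial. The series `S ≥ [S,G] ≥ [S,G,G] ≥ ⋯` stabilises at some `T = [T,G]`, and by
the three subgroups lemma `[γ_c(G), S] ≤ T`; so it suffices to show `T = 1`. Now `T` is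
nilpotent and `G` acts on it by `n`-Engel automorphisms. Passing to `T/[T,T]` and then to its
Sylow `p`-subgroup `B` keeps `B = [B,G]`. On the abelian `p`-group `B` of exponent `p^k`,
conjugation by `g` is `1 - w` with `wⁿ = 0`, so `g^(p^(k+n))` centralises `B`. Hence
`G = C_G(B) P` for a Sylow `p`-subgroup `P ⊇ B`, and `B = [B,G] = [B,P]` forces `B = 1`, as
`P` is nilpotent. -/

open scoped commutatorElement

/-- The iterated Engel commutator: `engelComm g a 0 = g`,
`engelComm g a (n+1) = ⁅engelComm g a n, a⁆`, so `engelComm g a n = [g,ₙ a]`. -/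
def engelComm {G : Type*} [Group G] (g a : G) : ℕ → G
  | 0 => g
  | n + 1 => ⁅engelComm g a n, a⁆

open Subgroup

section Engel

variable {G H : Type*} [Group G] [Group H]

theorem map_engelComm (f : G →* H) (g a : G) (j : ℕ) :
    f (engelComm g a j) = engelComm (f g) (f a) j := by
  induction j with
  | zero => rfl
  | succ j ih => simp only [engelComm, map_commutatorElement, ih]

theorem engelComm_mem {S : Subgroup G} [S.Normal] {g : G} (a : G) (hg : g ∈ S) (j : ℕ) :
    engelComm g a j ∈ S := by
  induction j with
  | zero => exact hg
  | succ j ih => exact commutator_le_left S ⊤ (commutator_mem_commutator ih (mem_top a))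

end Engel

theorem Nat.pow_dvd_choose_prime_pow {p k n i : ℕ} (hp : p.Prime) (hi : i ≠ 0) (hin : i < n) :
    p ^ k ∣ (p ^ (k + n)).choose i := by
  have hv := Nat.factorization_lt p hi
  have hip : i ≤ p ^ (k + n) :=
    hin.le.trans ((Nat.lt_pow_self hp.one_lt).le.trans (Nat.pow_le_pow_right hp.pos (by omega)))
  refine (pow_dvd_pow p ?_).trans (Nat.ordProj_dvd _ p)
  rw [Nat.factorization_choose_prime_pow hp hip hi]
  omega

theorem one_sub_pow_prime_pow_eq_one {R : Type*} [Ring R] {p k n : ℕ} (hp : p.Prime)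
    (hR : ((p ^ k : ℕ) : R) = 0) {w : R} (hw : w ^ n = 0) : (1 - w) ^ p ^ (k + n) = 1 := by
  rw [sub_eq_neg_add, (Commute.one_right (-w)).add_pow,
    Finset.sum_eq_single_of_mem 0 (by simp) ?_]
  · simp
  intro i _ hi
  rcases lt_or_ge i n with hin | hni
  · obtain ⟨d, hd⟩ := Nat.pow_dvd_choose_prime_pow (k := k) hp hi hin
    rw [hd, Nat.cast_mul, hR, zero_mul, mul_zero]
  · rw [neg_pow, ← pow_mul_pow_sub w hni, hw]
    simp

theorem Antitone.exists_succ_eq {α : Type*} [PartialOrder α] [Finite α] {f : ℕ → α}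
    (hf : Antitone f) : ∃ c, f (c + 1) = f c := by
  obtain ⟨i, j, hij, hfij⟩ := Finite.exists_ne_map_eq_of_infinite f
  wlog hlt : i < j generalizing i j
  · exact this j i hij.symm hfij.symm (hij.symm.lt_of_le (not_lt.1 hlt))
  exact ⟨i, le_antisymm (hf i.le_succ) (hfij ▸ hf hlt)⟩

namespace Subgroup

variable {G : Type*} [Group G]

theorem eq_bot_of_le_commutator {K H : Subgroup G} [Group.IsNilpotent H] (hKH : K ≤ H)
    (hK : K ≤ ⁅K, H⁆) : K = ⊥ := by
  obtain ⟨c, hc⟩ := (isNilpotent_iff_lowerCentralSeries H).1 ‹_›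
  have hle : ∀ j, K ≤ H.lowerCentralSeries j := by
    intro j
    induction j with
    | zero => exact hKH
    | succ j ih => exact hK.trans (commutator_mono ih le_rfl)
  exact le_bot_iff.1 (hc ▸ hle c)

theorem commutator_commutator_le_of_rotate {H₁ H₂ H₃ N : Subgroup G} [N.Normal]
    (h1 : ⁅⁅H₂, H₃⁆, H₁⁆ ≤ N) (h2 : ⁅⁅H₃, H₁⁆, H₂⁆ ≤ N) : ⁅⁅H₁, H₂⁆, H₃⁆ ≤ N := by
  have key (K : Subgroup G) : K.map (QuotientGroup.mk' N) = ⊥ ↔ K ≤ N := by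
    rw [map_eq_bot_iff, QuotientGroup.ker_mk']
  simp only [← key, map_commutator] at h1 h2 ⊢
  exact commutator_commutator_eq_bot_of_rotate h1 h2

theorem commutator_centralizer_sup_le {B H : Subgroup G} [B.Normal] :
    ⁅B, centralizer (B : Set G) ⊔ H⁆ ≤ ⁅B, H⁆ := by
  rw [commutator_le]
  intro b hb x hx
  obtain ⟨c, hc, h, hh, rfl⟩ := mem_sup_of_normal_left.1 hx
  have hbh : ⁅b, h⁆ ∈ B := commutator_le_left B ⊤ (commutator_mem_commutator hb (mem_top h))
  have hbc : b * c = c * b := mem_centralizer_iff.1 hc b hb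
  have : ⁅b, c * h⁆ = ⁅b, h⁆ := calc
    ⁅b, c * h⁆ = (b * c) * h * b⁻¹ * h⁻¹ * c⁻¹ := by group
    _ = c * ⁅b, h⁆ * c⁻¹ := by rw [hbc, commutatorElement_def]; group
    _ = ⁅b, h⁆ := by rw [← mem_centralizer_iff.1 hc _ hbh]; group
  rw [this]
  exact commutator_mem_commutator hb hh

theorem commutatorElement_pow_of_mem {A : Subgroup G} [A.Normal] [IsMulCommutative A] {a : G}
    (ha : a ∈ A) (g : G) (m : ℕ) : ⁅a, g⁆ ^ m = ⁅a ^ m, g⁆ := by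
  have hconj : g * a⁻¹ * g⁻¹ ∈ A := Normal.conj_mem ‹_› _ (A.inv_mem ha) g
  have h : ⁅a, g⁆ = a * (g * a⁻¹ * g⁻¹) := by group
  rw [h, Commute.mul_pow (setLike_mul_comm ha hconj), conj_pow, inv_pow, commutatorElement_def]
  group

def powRange (A : Subgroup G) [IsMulCommutative A] (m : ℕ) : Subgroup G where
  carrier := {x | ∃ a ∈ A, a ^ m = x}
  one_mem' := ⟨1, A.one_mem, one_pow m⟩
  mul_mem' := by
    rintro _ _ ⟨a, ha, rfl⟩ ⟨b, hb, rfl⟩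
    exact ⟨a * b, A.mul_mem ha hb, Commute.mul_pow (setLike_mul_comm ha hb) m⟩
  inv_mem' := by
    rintro _ ⟨a, ha, rfl⟩
    exact ⟨a⁻¹, A.inv_mem ha, inv_pow a m⟩

variable {A : Subgroup G} [IsMulCommutative A] {m : ℕ}

theorem powRange_le : A.powRange m ≤ A := by
  rintro _ ⟨a, ha, rfl⟩
  exact A.pow_mem ha m

instance : IsMulCommutative (A.powRange m) :=
  .of_setLike_mul_comm fun _ hx _ hy => setLike_mul_comm (powRange_le hx) (powRange_le hy)

instance [A.Normal] : (A.powRange m).Normal where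
  conj_mem := by
    rintro _ ⟨a, ha, rfl⟩ g
    exact ⟨g * a * g⁻¹, Normal.conj_mem ‹_› a ha g, conj_pow⟩

theorem commutator_powRange_top_eq_self [A.Normal] (hA : ⁅A, ⊤⁆ = A) :
    ⁅A.powRange m, ⊤⁆ = A.powRange m := by
  refine le_antisymm (commutator_le_left _ _) ?_
  rintro _ ⟨a, ha, rfl⟩
  rw [← hA, commutator_def] at ha
  induction ha using closure_induction with
  | mem _ h =>
    obtain ⟨a, ha, g, -, rfl⟩ := h
    rw [commutatorElement_pow_of_mem ha]
    exact commutator_mem_commutator ⟨a, ha, rfl⟩ (mem_top g)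
  | one => simp
  | mul x y hx hy ihx ihy =>
    rw [← commutator_def, hA] at hx hy
    rw [Commute.mul_pow (setLike_mul_comm hx hy)]
    exact mul_mem ihx ihy
  | inv x _ ih => simpa [inv_pow] using ih

def relLowerCentralSeries (S : Subgroup G) : ℕ → Subgroup G
  | 0 => S
  | i + 1 => ⁅S.relLowerCentralSeries i, ⊤⁆

variable (S : Subgroup G)

@[simp]
theorem relLowerCentralSeries_zero : S.relLowerCentralSeries 0 = S := rfl

@[simp]
theorem relLowerCentralSeries_succ (i : ℕ) :
    S.relLowerCentralSeries (i + 1) = ⁅S.relLowerCentralSeries i, ⊤⁆ := rfl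

variable [S.Normal]

instance relLowerCentralSeries_normal (i : ℕ) : (S.relLowerCentralSeries i).Normal := by
  induction i with
  | zero => exact ‹_›
  | succ i _ => exact commutator_normal _ _

theorem relLowerCentralSeries_antitone : Antitone S.relLowerCentralSeries :=
  antitone_nat_of_succ_le fun _ => commutator_le_left _ _

theorem relLowerCentralSeries_le (i : ℕ) : S.relLowerCentralSeries i ≤ S :=
  S.relLowerCentralSeries_antitone (Nat.zero_le i)

theorem commutator_lowerCentralSeries_relLowerCentralSeries_le (j i : ℕ) :
    ⁅(⊤ : Subgroup G).lowerCentralSeries j, S.relLowerCentralSeries i⁆ ≤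
      S.relLowerCentralSeries (i + j + 1) := by
  induction j generalizing i with
  | zero => rw [lowerCentralSeries_zero, commutator_comm]; rfl
  | succ j ih =>
    rw [lowerCentralSeries_succ, show i + (j + 1) + 1 = i + j + 2 by omega]
    apply commutator_commutator_le_of_rotate
    · rw [commutator_comm ⊤, commutator_comm, ← relLowerCentralSeries_succ]
      simpa only [show i + 1 + j + 1 = i + j + 2 by omega] using ih (i + 1)
    · rw [commutator_comm (S.relLowerCentralSeries i)]
      exact commutator_mono (ih i) le_rfl

end Subgroup

theorem Sylow.sup_eq_top_of_isPGroup_quotient {G : Type*} [Group G] [Finite G] {p : ℕ}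
    [Fact p.Prime] {N : Subgroup G} [N.Normal] (hN : IsPGroup p (G ⧸ N)) (P : Sylow p G) :
    N ⊔ P = ⊤ := by
  have h := (P.mapSurjective (QuotientGroup.mk'_surjective N)).is_maximal'
    (hN.to_subgroup ⊤) le_top
  rw [Sylow.coe_mapSurjective] at h
  rw [sup_comm, ← QuotientGroup.ker_mk' N, ← comap_map_eq, ← h, comap_top]

open scoped IsMulCommutative in
theorem pow_prime_pow_mem_centralizer {G : Type*} [Group G] {B : Subgroup G} [B.Normal]
    [IsMulCommutative B] {p k n : ℕ} (hp : p.Prime) (hB : ∀ b ∈ B, b ^ p ^ k = 1) {g : G}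
    (hg : ∀ b ∈ B, engelComm b g n = 1) : g ^ p ^ (k + n) ∈ centralizer (B : Set G) := by
  let ρ := Representation.ofMulDistribMulAction (ConjAct G) B
  have hρ (x : G) (b : B) :
      ((ρ (ConjAct.toConjAct x) (Additive.ofMul b)).toMul : G) = x * b * x⁻¹ := rfl
  set w := 1 - ρ (ConjAct.toConjAct g)
  have hw (j : ℕ) (b : B) : (((w ^ j) (Additive.ofMul b)).toMul : G) = engelComm (b : G) g j := by
    induction j generalizing b with
    | zero => rfl
    | succ j ih =>
      rw [pow_succ', Module.End.mul_apply, engelComm, ← ih]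
      generalize (w ^ j) (Additive.ofMul b) = y
      change ((y.toMul / (ρ (ConjAct.toConjAct g) (Additive.ofMul y.toMul)).toMul : B) : G) = _
      rw [coe_div, hρ, commutatorElement_def, div_eq_mul_inv]
      group
  have hwn : w ^ n = 0 := by
    ext b
    exact (hw n _).trans (hg _ b.toMul.2)
  have hpk : ((p ^ k : ℕ) : Module.End ℤ (Additive B)) = 0 := by
    ext b
    rw [Module.End.natCast_apply]
    exact hB _ b.toMul.2
  have hN := one_sub_pow_prime_pow_eq_one hp hpk hwn
  rw [sub_sub_cancel, ← map_pow, ← map_pow] at hN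
  rw [mem_centralizer_iff]
  intro b hb
  have := congrArg (fun f => ((f (Additive.ofMul (⟨b, hb⟩ : B))).toMul : G)) hN
  simp only [hρ] at this
  exact (mul_inv_eq_iff_eq_mul.1 this).symm

section EngelAction

variable {G : Type*} [Group G] [Finite G] {n : ℕ}

theorem eq_bot_of_commutator_top_eq_self_of_pow_eq_one {B : Subgroup G} [B.Normal]
    [IsMulCommutative B] {p k : ℕ} (hp : p.Prime) (hB : ∀ b ∈ B, b ^ p ^ k = 1)
    (hE : ∀ b ∈ B, ∀ g : G, engelComm b g n = 1) (hBG : ⁅B, ⊤⁆ = B) : B = ⊥ := by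
  have := Fact.mk hp
  have hQ : IsPGroup p (G ⧸ centralizer (B : Set G)) := by
    intro q
    induction q using QuotientGroup.induction_on with | H g => ?_
    refine ⟨k + n, ?_⟩
    rw [← QuotientGroup.mk_pow, QuotientGroup.eq_one_iff]
    exact pow_prime_pow_mem_centralizer hp hB fun b hb => hE b hb g
  obtain ⟨P⟩ : Nonempty (Sylow p G) := inferInstance
  have hBP : B ≤ P := IsPGroup.le_sylow_of_normal (fun b => ⟨k, Subtype.ext (hB b b.2)⟩) P
  have : Group.IsNilpotent P := P.isPGroup'.isNilpotent
  refine eq_bot_of_le_commutator hBP ?_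
  calc B = ⁅B, centralizer (B : Set G) ⊔ P⁆ := by
        rw [Sylow.sup_eq_top_of_isPGroup_quotient hQ P, hBG]
    _ ≤ ⁅B, (P : Subgroup G)⁆ := commutator_centralizer_sup_le

theorem eq_bot_of_commutator_top_eq_self_of_isMulCommutative {A : Subgroup G} [A.Normal]
    [IsMulCommutative A] (hE : ∀ a ∈ A, ∀ g : G, engelComm a g n = 1) (hA : ⁅A, ⊤⁆ = A) :
    A = ⊥ := by
  by_contra hA0
  have : Nontrivial A := (nontrivial_iff_ne_bot A).2 hA0
  obtain ⟨p, hp, hpA⟩ := Nat.exists_prime_and_dvd (Finite.one_lt_card (α := A)).ne'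
  have := Fact.mk hp
  have hcard : Nat.card A ≠ 0 := Nat.card_pos.ne'
  -- `A ^ m` with `m` the `p'`-part of `|A|` is the Sylow `p`-subgroup of `A`
  set m := Nat.card A / p ^ (Nat.card A).factorization p
  have hexp : ∀ b ∈ A.powRange m, b ^ p ^ (Nat.card A).factorization p = 1 := by
    rintro _ ⟨a, ha, rfl⟩
    rw [← pow_mul, Nat.div_mul_cancel (Nat.ordProj_dvd _ p)]
    exact congrArg Subtype.val (pow_card_eq_one' (x := (⟨a, ha⟩ : A)))
  have hB : A.powRange m = ⊥ := eq_bot_of_commutator_top_eq_self_of_pow_eq_one hp hexp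
    (fun b hb => hE b (powRange_le hb)) (commutator_powRange_top_eq_self hA)
  obtain ⟨x, hx⟩ := exists_prime_orderOf_dvd_card' p hpA
  have hxm : (x : G) ^ m = 1 := by
    have : (x : G) ^ m ∈ A.powRange m := ⟨x, x.2, rfl⟩
    rwa [hB, mem_bot] at this
  have hpm := orderOf_dvd_of_pow_eq_one hxm
  rw [orderOf_coe, hx] at hpm
  exact Nat.not_dvd_ordCompl hp hcard hpm

theorem eq_bot_of_commutator_top_eq_self_of_isNilpotent {T : Subgroup G} [T.Normal]
    [Group.IsNilpotent T] (hE : ∀ t ∈ T, ∀ g : G, engelComm t g n = 1) (hT : ⁅T, ⊤⁆ = T) :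
    T = ⊥ := by
  let π := QuotientGroup.mk' ⁅T, T⁆
  have hπ : Function.Surjective π := QuotientGroup.mk'_surjective _
  have : IsMulCommutative (T.map π) := .of_setLike_mul_comm <| by
    rintro _ ⟨a, ha, rfl⟩ _ ⟨b, hb, rfl⟩
    rw [← commutatorElement_eq_one_iff_mul_comm, ← map_commutatorElement,
      QuotientGroup.mk'_apply, QuotientGroup.eq_one_iff]
    exact commutator_mem_commutator ha hb
  have : (T.map π).Normal := Normal.map ‹_› π hπ
  have hA : T.map π = ⊥ := by
    refine eq_bot_of_commutator_top_eq_self_of_isMulCommutative (n := n) ?_ ?_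
    · rintro _ ⟨t, ht, rfl⟩ q
      obtain ⟨g, rfl⟩ := hπ q
      rw [← map_engelComm, hE t ht g, map_one]
    · rw [← map_top_of_surjective π hπ, ← map_commutator, hT]
  refine eq_bot_of_le_commutator le_rfl ?_
  rwa [Subgroup.map_eq_bot_iff, QuotientGroup.ker_mk'] at hA

end EngelAction

theorem stmt16_general (G : Type) [Group G] [Finite G] (n : ℕ)
    (S : Subgroup G) (hSnormal : S.Normal) (hSnilp : Group.IsNilpotent ↥S)
    (hnoval : ∀ g a : G, engelComm g a n ∈ S → engelComm g a n = 1) :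
    (∀ a : G, ∀ s ∈ S, engelComm s a n = 1) ∧
      ∃ c, (⊤ : Subgroup G).lowerCentralSeries c ≤ Subgroup.centralizer (S : Set G) := by
  have hE : ∀ a : G, ∀ s ∈ S, engelComm s a n = 1 := fun a s hs =>
    hnoval s a (engelComm_mem a hs n)
  refine ⟨hE, ?_⟩
  obtain ⟨c, hc⟩ := S.relLowerCentralSeries_antitone.exists_succ_eq
  have : Group.IsNilpotent (S.relLowerCentralSeries c) :=
    Group.nilpotent_of_mulEquiv (subgroupOfEquivOfLe (S.relLowerCentralSeries_le c))
  have hbot : S.relLowerCentralSeries c = ⊥ :=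
    eq_bot_of_commutator_top_eq_self_of_isNilpotent
      (fun t ht g => hE g t (S.relLowerCentralSeries_le c ht)) hc
  refine ⟨c, ?_⟩
  rw [← commutator_eq_bot_iff_le_centralizer, ← le_bot_iff]
  simpa [hc, hbot] using S.commutator_lowerCentralSeries_relLowerCentralSeries_le c 0

/-- Let `w` be the `n`-th Engel word (`n ≥ 1`) and `G` a finite group in which
all `w`-values have order dividing `e` and every nilpotent subgroup generated
by `w`-values has exponent dividing `e`.  Let `S` be a normal nilpotent
subgroup of `G` containing no nontrivial `w`-values of `G`.  Then every element
of `G` induces a nil-automorphism of `S` (indeed `[s,ₙ a] = 1` for all `a ∈ G`,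
`s ∈ S`) and `G/C_G(S)` is nilpotent. -/
theorem stmt16 (G : Type) [Group G] [Finite G] (n e : ℕ) (hn : 1 ≤ n)
    (he : 0 < e)
    (horder : ∀ g a : G, engelComm g a n ^ e = 1)
    (hnilp : ∀ H : Subgroup G, Group.IsNilpotent ↥H →
      (∃ S : Set G, (∀ x ∈ S, ∃ g a : G, x = engelComm g a n) ∧
        Subgroup.closure S = H) →
      ∀ h ∈ H, h ^ e = 1)
    (S : Subgroup G) (hSnormal : S.Normal) (hSnilp : Group.IsNilpotent ↥S)
    (hnoval : ∀ g a : G, engelComm g a n ∈ S → engelComm g a n = 1) :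
    (∀ a : G, ∀ s ∈ S, engelComm s a n = 1) ∧
      ∃ c, (⊤ : Subgroup G).lowerCentralSeries c ≤ Subgroup.centralizer (S : Set G) :=
  stmt16_general G n S hSnormal hSnilp hnoval
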